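/- Let (F_k)_{k∈K} be a finite family of triangular faces with vertex list r : ι → ℝ³ (ι finite), with face area vectors S_F = (1/2)(r_{F₁} − r_{F₀}) × (r_{F₂} − r_{F₀}) all nonzero, and let A(r) = Σ_F ‖S_F‖ be the total surface area. Then Σ_{a∈ι} r_a ⊗ ∇_{r_a} A = A · I − Σ_F (1/‖S_F‖) S_F ⊗ S_F. -/

import Mathlib

open Matrix BigOperators

/-- Euclidean norm on `ℝ³` realized as `Fin 3 → ℝ`. -/
noncomputable def norm3 (v : Fin 3 → ℝ) : ℝ := Real.sqrt (v ⬝ᵥ v)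

/-- The area vector of a triangular face `T = (T₀, T₁, T₂)` with vertex list `r`:
`S_T = (1/2) (r T₁ - r T₀) ⨯₃ (r T₂ - r T₀)`. -/
noncomputable def faceAreaVec {ι : Type*} (r : ι → Fin 3 → ℝ) (T : ι × ι × ι) : Fin 3 → ℝ :=
  (1 / 2 : ℝ) • ((r T.2.1 - r T.1) ⨯₃ (r T.2.2 - r T.1))

/-- The total surface area `A = ∑_F ‖S_F‖` of a family of triangular faces. -/
noncomputable def polyArea {K ι : Type*} [Fintype K] (F : K → ι × ι × ι)
    (r : ι → Fin 3 → ℝ) : ℝ :=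
  ∑ k : K, norm3 (faceAreaVec r (F k))

/-- The gradient of a scalar function of a single point of `ℝ³`. -/
noncomputable def grad3 (f : (Fin 3 → ℝ) → ℝ) (x : Fin 3 → ℝ) : Fin 3 → ℝ :=
  fun i => fderiv ℝ f x (Pi.single i 1)

/-- The gradient of a scalar function of a family of points with respect to the vertex `a`. -/
noncomputable def vgrad {ι : Type*} [DecidableEq ι] (f : (ι → Fin 3 → ℝ) → ℝ)
    (r : ι → Fin 3 → ℝ) (a : ι) : Fin 3 → ℝ :=
  grad3 (fun x => f (Function.update r a x)) (r a)

/- ------------------- auxiliary machinery ------------------- -/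

lemma dot_self_nonneg3 (v : Fin 3 → ℝ) : 0 ≤ v ⬝ᵥ v :=
  Finset.sum_nonneg fun i _ => mul_self_nonneg (v i)

lemma dot_self_pos3 {v : Fin 3 → ℝ} (h : v ≠ 0) : 0 < v ⬝ᵥ v := by
  rcases lt_or_eq_of_le (dot_self_nonneg3 v) with h' | h'
  · exact h'
  · exfalso; apply h; funext i
    have := (Finset.sum_eq_zero_iff_of_nonneg (fun i _ => mul_self_nonneg (v i))).mp h'.symm
    have hi := this i (Finset.mem_univ i)
    have := mul_self_eq_zero.mp hi
    simpa using this

lemma norm3_pos {v : Fin 3 → ℝ} (h : v ≠ 0) : 0 < norm3 v :=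
  Real.sqrt_pos.mpr (dot_self_pos3 h)

/-- Indicator coefficient. -/
noncomputable def eC {ι : Type*} [DecidableEq ι] (t a : ι) : ℝ := if t = a then 1 else 0

/-- Complementary constant part. -/
noncomputable def bC {ι : Type*} [DecidableEq ι] (r : ι → Fin 3 → ℝ) (t a : ι) : Fin 3 → ℝ :=
  if t = a then 0 else r t

lemma upd_sub {ι : Type*} [DecidableEq ι] (r : ι → Fin 3 → ℝ) (a : ι) (x : Fin 3 → ℝ)
    (t s : ι) : Function.update r a x t - Function.update r a x s
      = (eC t a - eC s a) • x + (bC r t a - bC r s a) := by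
  by_cases ht : t = a <;> by_cases hs : s = a <;>
    simp [eC, bC, ht, hs, Function.update_apply, sub_smul] <;> abel

lemma upd_pt {ι : Type*} [DecidableEq ι] (r : ι → Fin 3 → ℝ) (a : ι) (t s : ι) :
    (eC t a - eC s a) • r a + (bC r t a - bC r s a) = r t - r s := by
  rw [← upd_sub, Function.update_eq_self]

lemma sum_eC {ι : Type*} [Fintype ι] [DecidableEq ι] (g : ι → ℝ) (t : ι) :
    ∑ a : ι, g a * eC t a = g t := by
  simp [eC, mul_ite, Finset.sum_ite_eq]

set_option maxHeartbeats 4000000 in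
/-- Master derivative lemma: differentiability and gradient of
`x ↦ ‖(1/2) (c₁ x + b₁) × (c₂ x + b₂)‖`. -/
lemma master (c1 c2 : ℝ) (b1 b2 x0 : Fin 3 → ℝ)
    (hne : (1/2:ℝ) • ((c1 • x0 + b1) ⨯₃ (c2 • x0 + b2)) ≠ 0) :
    DifferentiableAt ℝ (fun x => norm3 ((1/2:ℝ) • ((c1 • x + b1) ⨯₃ (c2 • x + b2)))) x0 ∧
      ∀ i, fderiv ℝ (fun x => norm3 ((1/2:ℝ) • ((c1 • x + b1) ⨯₃ (c2 • x + b2)))) x0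
          (Pi.single i 1) =
        c1 * ((norm3 ((1/2:ℝ) • ((c1 • x0 + b1) ⨯₃ (c2 • x0 + b2))))⁻¹ *
              (((1/2:ℝ) • ((c1 • x0 + b1) ⨯₃ (c2 • x0 + b2))) ⬝ᵥ
                ((1/2:ℝ) • (Pi.single i 1 ⨯₃ (c2 • x0 + b2)))))
        + c2 * ((norm3 ((1/2:ℝ) • ((c1 • x0 + b1) ⨯₃ (c2 • x0 + b2))))⁻¹ *
              (((1/2:ℝ) • ((c1 • x0 + b1) ⨯₃ (c2 • x0 + b2))) ⬝ᵥ
                ((1/2:ℝ) • ((c1 • x0 + b1) ⨯₃ Pi.single i 1)))) := by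
  have hA : ∀ j : Fin 3, HasFDerivAt (fun x : Fin 3 → ℝ => c1 * x j + b1 j)
      (c1 • (ContinuousLinearMap.proj j : (Fin 3 → ℝ) →L[ℝ] ℝ)) x0 :=
    fun j => ((hasFDerivAt_apply j x0).const_mul c1).add_const _
  have hB : ∀ j : Fin 3, HasFDerivAt (fun x : Fin 3 → ℝ => c2 * x j + b2 j)
      (c2 • (ContinuousLinearMap.proj j : (Fin 3 → ℝ) →L[ℝ] ℝ)) x0 :=
    fun j => ((hasFDerivAt_apply j x0).const_mul c2).add_const _
  have h0 := ((hA 1).mul (hB 2)).sub ((hA 2).mul (hB 1))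
  have h1 := ((hA 2).mul (hB 0)).sub ((hA 0).mul (hB 2))
  have h2 := ((hA 0).mul (hB 1)).sub ((hA 1).mul (hB 0))
  have hq := ((h0.mul h0).add ((h1.mul h1).add (h2.mul h2))).const_mul (1/4:ℝ)
  set q : (Fin 3 → ℝ) → ℝ := fun x => (1/4:ℝ) *
    (((c1*x 1+b1 1)*(c2*x 2+b2 2) - (c1*x 2+b1 2)*(c2*x 1+b2 1)) * ((c1*x 1+b1 1)*(c2*x 2+b2 2) - (c1*x 2+b1 2)*(c2*x 1+b2 1)) +
      (((c1*x 2+b1 2)*(c2*x 0+b2 0) - (c1*x 0+b1 0)*(c2*x 2+b2 2)) * ((c1*x 2+b1 2)*(c2*x 0+b2 0) - (c1*x 0+b1 0)*(c2*x 2+b2 2)) +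
       ((c1*x 0+b1 0)*(c2*x 1+b2 1) - (c1*x 1+b1 1)*(c2*x 0+b2 0)) * ((c1*x 0+b1 0)*(c2*x 1+b2 1) - (c1*x 1+b1 1)*(c2*x 0+b2 0)))) with hqdef
  have hfun : (fun x => norm3 ((1/2:ℝ) • ((c1 • x + b1) ⨯₃ (c2 • x + b2)))) =
      fun x => Real.sqrt (q x) := by
    funext x
    unfold norm3
    congr 1
    simp [hqdef, cross_apply, dotProduct, Fin.sum_univ_three, Pi.smul_apply, smul_eq_mul]
    ring
  have hqval : q x0 = ((1/2:ℝ) • ((c1 • x0 + b1) ⨯₃ (c2 • x0 + b2))) ⬝ᵥ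
      ((1/2:ℝ) • ((c1 • x0 + b1) ⨯₃ (c2 • x0 + b2))) := by
    simp [hqdef, cross_apply, dotProduct, Fin.sum_univ_three, Pi.smul_apply, smul_eq_mul]
    ring
  have hq0 : q x0 ≠ 0 := by rw [hqval]; exact ne_of_gt (dot_self_pos3 hne)
  have hD := (Real.hasDerivAt_sqrt hq0).comp_hasFDerivAt x0 hq
  constructor
  · rw [hfun]; exact hD.differentiableAt
  intro i
  rw [hfun, show (fun x => Real.sqrt (q x)) = (fun x => Real.sqrt x) ∘ q from rfl,
    hD.fderiv]
  simp only [ContinuousLinearMap.smul_apply, ContinuousLinearMap.add_apply,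
    ContinuousLinearMap.sub_apply, ContinuousLinearMap.coe_smul', Pi.smul_apply,
    ContinuousLinearMap.proj_apply, smul_eq_mul]
  have hsq : Real.sqrt (q x0) = norm3 ((1/2:ℝ) • ((c1 • x0 + b1) ⨯₃ (c2 • x0 + b2))) := by
    rw [norm3, hqval]
  rw [hsq]
  have hnn : norm3 ((1/2:ℝ) • ((c1 • x0 + b1) ⨯₃ (c2 • x0 + b2))) ≠ 0 :=
    ne_of_gt (norm3_pos hne)
  set n := norm3 ((1/2:ℝ) • ((c1 • x0 + b1) ⨯₃ (c2 • x0 + b2))) with hndef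
  fin_cases i <;>
  · simp [cross_apply, dotProduct, Fin.sum_univ_three, Pi.smul_apply, Pi.add_apply,
      smul_eq_mul, Matrix.cons_val_zero, Matrix.cons_val_one, Matrix.head_cons,
      Pi.single_apply]
    field_simp
    ring

set_option maxHeartbeats 4000000 in
/-- Per-face algebraic identity. -/
lemma face_identity (u v : Fin 3 → ℝ) (hne : (1/2:ℝ) • (u ⨯₃ v) ≠ 0) (i j : Fin 3) :
    (u i) * ((norm3 ((1/2:ℝ) • (u ⨯₃ v)))⁻¹ *
        (((1/2:ℝ) • (u ⨯₃ v)) ⬝ᵥ ((1/2:ℝ) • (Pi.single j 1 ⨯₃ v))))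
    + (v i) * ((norm3 ((1/2:ℝ) • (u ⨯₃ v)))⁻¹ *
        (((1/2:ℝ) • (u ⨯₃ v)) ⬝ᵥ ((1/2:ℝ) • (u ⨯₃ Pi.single j 1))))
    = norm3 ((1/2:ℝ) • (u ⨯₃ v)) * (if i = j then 1 else 0)
      - (norm3 ((1/2:ℝ) • (u ⨯₃ v)))⁻¹ *
        (((1/2:ℝ) • (u ⨯₃ v)) i * ((1/2:ℝ) • (u ⨯₃ v)) j) := by
  have hnn : norm3 ((1/2:ℝ) • (u ⨯₃ v)) ≠ 0 := ne_of_gt (norm3_pos hne)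
  have hmul : norm3 ((1/2:ℝ) • (u ⨯₃ v)) * norm3 ((1/2:ℝ) • (u ⨯₃ v))
      = ((1/2:ℝ) • (u ⨯₃ v)) ⬝ᵥ ((1/2:ℝ) • (u ⨯₃ v)) :=
    Real.mul_self_sqrt (dot_self_nonneg3 _)
  have key : u i * (((1/2:ℝ) • (u ⨯₃ v)) ⬝ᵥ ((1/2:ℝ) • (Pi.single j 1 ⨯₃ v)))
      + v i * (((1/2:ℝ) • (u ⨯₃ v)) ⬝ᵥ ((1/2:ℝ) • (u ⨯₃ Pi.single j 1)))
      = (((1/2:ℝ) • (u ⨯₃ v)) ⬝ᵥ ((1/2:ℝ) • (u ⨯₃ v))) * (if i = j then 1 else 0)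
        - ((1/2:ℝ) • (u ⨯₃ v)) i * ((1/2:ℝ) • (u ⨯₃ v)) j := by
    fin_cases i <;> fin_cases j <;>
    · simp [cross_apply, dotProduct, Fin.sum_univ_three, Pi.smul_apply, smul_eq_mul,
        Pi.single_apply]
      ring
  rw [← hmul] at key
  set n := norm3 ((1/2:ℝ) • (u ⨯₃ v)) with hndef
  set D1 := ((1/2:ℝ) • (u ⨯₃ v)) ⬝ᵥ ((1/2:ℝ) • (Pi.single j 1 ⨯₃ v)) with hD1
  set D2 := ((1/2:ℝ) • (u ⨯₃ v)) ⬝ᵥ ((1/2:ℝ) • (u ⨯₃ Pi.single j 1)) with hD2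
  set Si := ((1/2:ℝ) • (u ⨯₃ v)) i with hSi
  set Sj := ((1/2:ℝ) • (u ⨯₃ v)) j with hSj
  have expand : (u i) * (n⁻¹ * D1) + (v i) * (n⁻¹ * D2)
      = n⁻¹ * (u i * D1 + v i * D2) := by ring
  rw [expand, key]
  field_simp

set_option maxHeartbeats 4000000 in
/-- For a finite family of triangular faces with all face area vectors
nonzero, `∑_a r_a ⊗ ∇_{r_a} A = A · I - ∑_F (1/‖S_F‖) S_F ⊗ S_F`. -/
theorem stmt10 {K ι : Type*} [Fintype K] [Fintype ι] [DecidableEq ι]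
    (F : K → ι × ι × ι) (r : ι → Fin 3 → ℝ)
    (hS : ∀ k : K, faceAreaVec r (F k) ≠ 0) :
    ∑ a : ι, vecMulVec (r a) (vgrad (fun s => polyArea F s) r a)
      = polyArea F r • (1 : Matrix (Fin 3) (Fin 3) ℝ)
        - ∑ k : K, (norm3 (faceAreaVec r (F k)))⁻¹ •
            vecMulVec (faceAreaVec r (F k)) (faceAreaVec r (F k)) := by
  classical
  have hSk : ∀ k : K, faceAreaVec r (F k)
      = (1/2:ℝ) • ((r (F k).2.1 - r (F k).1) ⨯₃ (r (F k).2.2 - r (F k).1)) := fun k => rfl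
  have hne : ∀ (a : ι) (k : K),
      (1/2:ℝ) • (((eC (F k).2.1 a - eC (F k).1 a) • r a + (bC r (F k).2.1 a - bC r (F k).1 a)) ⨯₃
        ((eC (F k).2.2 a - eC (F k).1 a) • r a + (bC r (F k).2.2 a - bC r (F k).1 a))) ≠ 0 := by
    intro a k
    rw [upd_pt, upd_pt, ← hSk k]
    exact hS k
  have hface : ∀ (a : ι) (k : K),
      (fun x : Fin 3 → ℝ => norm3 (faceAreaVec (Function.update r a x) (F k)))
      = fun x => norm3 ((1/2:ℝ) •
          ((((eC (F k).2.1 a - eC (F k).1 a)) • x + (bC r (F k).2.1 a - bC r (F k).1 a)) ⨯₃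
           (((eC (F k).2.2 a - eC (F k).1 a)) • x + (bC r (F k).2.2 a - bC r (F k).1 a)))) := by
    intro a k
    funext x
    simp only [faceAreaVec]
    rw [upd_sub, upd_sub]
  have hdiff : ∀ (a : ι) (k : K),
      DifferentiableAt ℝ (fun x => norm3 (faceAreaVec (Function.update r a x) (F k))) (r a) := by
    intro a k
    rw [hface a k]
    exact (master _ _ _ _ _ (hne a k)).1
  have hgrad : ∀ (a : ι) (k : K) (j : Fin 3),
      fderiv ℝ (fun x => norm3 (faceAreaVec (Function.update r a x) (F k))) (r a)
        (Pi.single j 1)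
      = (eC (F k).2.1 a - eC (F k).1 a) * ((norm3 (faceAreaVec r (F k)))⁻¹ *
          (faceAreaVec r (F k) ⬝ᵥ ((1/2:ℝ) • (Pi.single j 1 ⨯₃ (r (F k).2.2 - r (F k).1)))))
      + (eC (F k).2.2 a - eC (F k).1 a) * ((norm3 (faceAreaVec r (F k)))⁻¹ *
          (faceAreaVec r (F k) ⬝ᵥ ((1/2:ℝ) • ((r (F k).2.1 - r (F k).1) ⨯₃ Pi.single j 1)))) := by
    intro a k j
    rw [hface a k]
    rw [(master _ _ _ _ _ (hne a k)).2 j]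
    rw [upd_pt, upd_pt, ← hSk k]
  have hvg : ∀ (a : ι) (j : Fin 3), vgrad (fun s => polyArea F s) r a j
      = ∑ k : K,
        ((eC (F k).2.1 a - eC (F k).1 a) * ((norm3 (faceAreaVec r (F k)))⁻¹ *
          (faceAreaVec r (F k) ⬝ᵥ ((1/2:ℝ) • (Pi.single j 1 ⨯₃ (r (F k).2.2 - r (F k).1)))))
        + (eC (F k).2.2 a - eC (F k).1 a) * ((norm3 (faceAreaVec r (F k)))⁻¹ *
          (faceAreaVec r (F k) ⬝ᵥ ((1/2:ℝ) • ((r (F k).2.1 - r (F k).1) ⨯₃ Pi.single j 1))))) := by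
    intro a j
    show fderiv ℝ (fun x => polyArea F (Function.update r a x)) (r a) (Pi.single j 1) = _
    have hrw : (fun x => polyArea F (Function.update r a x))
        = fun x => ∑ k : K, norm3 (faceAreaVec (Function.update r a x) (F k)) := rfl
    rw [hrw, fderiv_fun_sum (fun k _ => hdiff a k), ContinuousLinearMap.sum_apply]
    exact Finset.sum_congr rfl fun k _ => hgrad a k j
  ext i j
  rw [Matrix.sum_apply, Matrix.sub_apply, Matrix.smul_apply, Matrix.one_apply,
    Matrix.sum_apply, smul_eq_mul]
  have lhs1 : ∑ a : ι, vecMulVec (r a) (vgrad (fun s => polyArea F s) r a) i j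
      = ∑ k : K,
        ((r (F k).2.1 i - r (F k).1 i) * ((norm3 (faceAreaVec r (F k)))⁻¹ *
          (faceAreaVec r (F k) ⬝ᵥ ((1/2:ℝ) • (Pi.single j 1 ⨯₃ (r (F k).2.2 - r (F k).1)))))
        + (r (F k).2.2 i - r (F k).1 i) * ((norm3 (faceAreaVec r (F k)))⁻¹ *
          (faceAreaVec r (F k) ⬝ᵥ ((1/2:ℝ) • ((r (F k).2.1 - r (F k).1) ⨯₃ Pi.single j 1))))) := by
    rw [Finset.sum_congr rfl (fun a _ => by
      rw [vecMulVec_apply, hvg a j, Finset.mul_sum])]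
    rw [Finset.sum_comm]
    refine Finset.sum_congr rfl fun k _ => ?_
    have h1 : ∀ (t s : ι) (w : ℝ),
        ∑ a : ι, r a i * ((eC t a - eC s a) * w) = (r t i - r s i) * w := by
      intro t s w
      rw [Finset.sum_congr rfl (fun a _ =>
        show r a i * ((eC t a - eC s a) * w)
          = (r a i * w) * eC t a - (r a i * w) * eC s a by ring)]
      rw [Finset.sum_sub_distrib, sum_eC, sum_eC]
      ring
    rw [Finset.sum_congr rfl (fun a _ => mul_add (r a i) _ _), Finset.sum_add_distrib,
      h1, h1]
  rw [lhs1]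
  have rhs1 : polyArea F r * (if i = j then 1 else 0)
      - ∑ k : K, ((norm3 (faceAreaVec r (F k)))⁻¹ •
          vecMulVec (faceAreaVec r (F k)) (faceAreaVec r (F k))) i j
      = ∑ k : K, (norm3 (faceAreaVec r (F k)) * (if i = j then 1 else 0)
          - (norm3 (faceAreaVec r (F k)))⁻¹ *
            (faceAreaVec r (F k) i * faceAreaVec r (F k) j)) := by
    simp only [Matrix.smul_apply, vecMulVec_apply, smul_eq_mul, polyArea, Finset.sum_mul]
    rw [Finset.sum_sub_distrib]
  rw [rhs1]
  refine Finset.sum_congr rfl fun k _ => ?_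
  have hid := face_identity (r (F k).2.1 - r (F k).1) (r (F k).2.2 - r (F k).1)
    (by rw [← hSk k]; exact hS k) i j
  rw [← hSk k] at hid
  simpa only [Pi.sub_apply] using hid
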